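/- Fix p ≥ 1, finite nonempty types S_1, …, S_p of protected attribute values, a finite type Y of outcomes, and a joint probability mass function q on (S_1 × … × S_p) × Y, i.e. q ≥ 0 and ∑_{s,y} q(s,y) = 1. For a full attribute tuple s with marginal P(s) = ∑_y q(s,y) > 0 define P(y|s) = q(s,y)/P(s); for a nonempty subset T of the attribute indices and a partial tuple d (a value assignment on the coordinates in T) with marginal P(d) = ∑_{s restricting to d} P(s) > 0, define P(y|d) = (∑_{s restricting to d} q(s,y))/P(d). Suppose that for every outcome y ∈ Y and every pair of full tuples s, s' with P(s) > 0 and P(s') > 0 we have P(y|s) ≤ exp(ε)·P(y|s'). Then for every outcome y ∈ Y and every pair of partial tuples d, d' on T with P(d) > 0 and P(d') > 0 we have P(y|d) ≤ exp(ε)·P(y|d'). -/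

import Mathlib

/-!
Cross-multiplying, `P(y|d) ≤ exp ε * P(y|d')` becomes an inequality between two double sums over
pairs `(s, s')` of full tuples restricting to `d` and `d'`. It holds term by term, since each term
compares `q (s, y) * P s'` with `exp ε * (q (s', y) * P s)`: that is the ε-DF condition for the
pair `(s, s')` after cross-multiplying, and it holds trivially when `P s = 0` or `P s' = 0`.
-/

open Finset

section RatioOfSums

variable {ι R : Type*}

theorem sum_mul_sum_le_mul_sum_mul_sum [CommSemiring R] [PartialOrder R] [IsOrderedRing R]
    (A B : Finset ι) (a w : ι → R) (c : R)
    (h : ∀ i ∈ A, ∀ j ∈ B, a i * w j ≤ c * (a j * w i)) :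
    (∑ i ∈ A, a i) * ∑ j ∈ B, w j ≤ c * ((∑ j ∈ B, a j) * ∑ i ∈ A, w i) := by
  rw [sum_mul_sum, sum_mul_sum, sum_comm (s := B), mul_sum]
  refine sum_le_sum fun i hi => ?_
  rw [mul_sum]
  exact sum_le_sum fun j hj => h i hi j hj

theorem sum_div_sum_le_mul_sum_div_sum [Field R] [LinearOrder R] [IsStrictOrderedRing R]
    (A B : Finset ι) (a w : ι → R) (c : R)
    (h : ∀ i ∈ A, ∀ j ∈ B, a i * w j ≤ c * (a j * w i))
    (hA : 0 < ∑ i ∈ A, w i) (hB : 0 < ∑ j ∈ B, w j) :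
    (∑ i ∈ A, a i) / ∑ i ∈ A, w i ≤ c * ((∑ j ∈ B, a j) / ∑ j ∈ B, w j) := by
  rw [div_le_iff₀ hA, ← mul_div_assoc, div_mul_eq_mul_div, le_div_iff₀ hB, mul_assoc]
  exact sum_mul_sum_le_mul_sum_mul_sum A B a w c h

theorem mul_le_mul_mul_of_div_le_mul_div [Field R] [LinearOrder R] [IsStrictOrderedRing R]
    (a w : ι → R) (c : R) (ha : ∀ i, 0 ≤ a i) (haw : ∀ i, a i ≤ w i)
    (hc : 0 ≤ c) (h : ∀ i j, 0 < w i → 0 < w j → a i / w i ≤ c * (a j / w j))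
    (i j : ι) : a i * w j ≤ c * (a j * w i) := by
  have hw : ∀ i, 0 ≤ w i := fun i => (ha i).trans (haw i)
  have hrhs : 0 ≤ c * (a j * w i) := mul_nonneg hc (mul_nonneg (ha j) (hw i))
  rcases (hw i).eq_or_lt with hi | hi
  · rw [le_antisymm (hi ▸ haw i) (ha i), zero_mul]
    exact hrhs
  rcases (hw j).eq_or_lt with hj | hj
  · rw [← hj, mul_zero]
    exact hrhs
  have hdiv := h i j hi hj
  rwa [div_le_iff₀ hi, ← mul_div_assoc, div_mul_eq_mul_div, le_div_iff₀ hj, mul_assoc] at hdiv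

end RatioOfSums

theorem intersectionality_property_general
    {p : ℕ} (S : Fin p → Type*)
    [∀ i, Fintype (S i)] [∀ i, DecidableEq (S i)]
    (Y : Type*) [Fintype Y]
    (q : (∀ i, S i) × Y → ℝ) (hq0 : ∀ z, 0 ≤ q z)
    (ε : ℝ)
    (hDF : ∀ y : Y, ∀ s s' : ∀ i, S i,
      0 < ∑ y', q (s, y') → 0 < ∑ y', q (s', y') →
      q (s, y) / (∑ y', q (s, y')) ≤ Real.exp ε * (q (s', y) / (∑ y', q (s', y'))))
    (T : Finset (Fin p)) :
    ∀ y : Y, ∀ d d' : (∀ i : T, S i),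
      0 < (∑ s : ∀ i, S i, if (fun i : T => s i) = d then (∑ y', q (s, y')) else 0) →
      0 < (∑ s : ∀ i, S i, if (fun i : T => s i) = d' then (∑ y', q (s, y')) else 0) →
      (∑ s : ∀ i, S i, if (fun i : T => s i) = d then q (s, y) else 0) /
          (∑ s : ∀ i, S i, if (fun i : T => s i) = d then (∑ y', q (s, y')) else 0) ≤
        Real.exp ε *
          ((∑ s : ∀ i, S i, if (fun i : T => s i) = d' then q (s, y) else 0) /
            (∑ s : ∀ i, S i, if (fun i : T => s i) = d' then (∑ y', q (s, y')) else 0)) := by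
  intro y d d' hd hd'
  simp only [← sum_filter] at hd hd' ⊢
  have hcross : ∀ s s' : ∀ i, S i,
      q (s, y) * ∑ y', q (s', y') ≤ Real.exp ε * (q (s', y) * ∑ y', q (s, y')) :=
    mul_le_mul_mul_of_div_le_mul_div (fun s => q (s, y)) (fun s => ∑ y', q (s, y')) _
      (fun s => hq0 _) (fun s => single_le_sum (fun y' _ => hq0 (s, y')) (mem_univ y))
      (Real.exp_pos ε).le (hDF y)
  exact sum_div_sum_le_mul_sum_div_sum _ _ _ _ _ (fun s _ s' _ => hcross s s') hd hd'

/-- Theorem 2 (Intersectionality Property), finite probabilistic form: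
ε-DF over the full product of protected attributes implies ε-DF over the product
of any nonempty subset of the attributes, after marginalizing the joint pmf. -/
theorem intersectionality_property
    {p : ℕ} (hp : 1 ≤ p) (S : Fin p → Type*)
    [∀ i, Fintype (S i)] [∀ i, Nonempty (S i)] [∀ i, DecidableEq (S i)]
    (Y : Type*) [Fintype Y]
    (q : (∀ i, S i) × Y → ℝ) (hq0 : ∀ z, 0 ≤ q z) (hq1 : ∑ z, q z = 1)
    (ε : ℝ)
    (hDF : ∀ y : Y, ∀ s s' : ∀ i, S i,
      0 < ∑ y', q (s, y') → 0 < ∑ y', q (s', y') →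
      q (s, y) / (∑ y', q (s, y')) ≤ Real.exp ε * (q (s', y) / (∑ y', q (s', y'))))
    (T : Finset (Fin p)) (hT : T.Nonempty) :
    ∀ y : Y, ∀ d d' : (∀ i : T, S i),
      0 < (∑ s : ∀ i, S i, if (fun i : T => s i) = d then (∑ y', q (s, y')) else 0) →
      0 < (∑ s : ∀ i, S i, if (fun i : T => s i) = d' then (∑ y', q (s, y')) else 0) →
      (∑ s : ∀ i, S i, if (fun i : T => s i) = d then q (s, y) else 0) /
          (∑ s : ∀ i, S i, if (fun i : T => s i) = d then (∑ y', q (s, y')) else 0) ≤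
        Real.exp ε *
          ((∑ s : ∀ i, S i, if (fun i : T => s i) = d' then q (s, y) else 0) /
            (∑ s : ∀ i, S i, if (fun i : T => s i) = d' then (∑ y', q (s, y')) else 0)) :=
  intersectionality_property_general S Y q hq0 ε hDF T
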